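/- Let J ⊆ V be nonempty and l' = ∑_{v∈J} a_v E*_v with all a_v ∈ ℤ_{>0}. If l'' ∈ S' satisfies l''_v ≥ l'_v for every v ∈ J, then l'' ≥ l' coordinatewise on all of V. Equivalently, for l'' ∈ S': if l'' ≱ l', then l''_v < l'_v for some v ∈ J. -/

import Mathlib

open Classical

attribute [local instance 10] Classical.propDecidable

noncomputable section

namespace SWpaper

variable {V : Type} [Fintype V] [DecidableEq V]

/-- The intersection matrix of a tree with integer vertex weights `b`:
diagonal entries `b v`, off-diagonal entries `1` for adjacent vertices, `0` otherwise. -/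
def imat (G : SimpleGraph V) (b : V → ℤ) : Matrix V V ℚ :=
  Matrix.of fun u v => if u = v then (b u : ℚ) else if G.Adj u v then 1 else 0

/-- Negative definiteness of a rational matrix. -/
def NegDef (M : Matrix V V ℚ) : Prop :=
  ∀ x : V → ℚ, x ≠ 0 → dotProduct x (M.mulVec x) < 0

/-- The intersection pairing `(x, y) = xᵀ I y`. -/
def pairing (G : SimpleGraph V) (b : V → ℤ) (x y : V → ℚ) : ℚ :=
  dotProduct x ((imat G b).mulVec y)

/-- The dual base element `E*_v`, the `v`-th column of `-(imat G b)⁻¹`. -/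
def Estar (G : SimpleGraph V) (b : V → ℤ) (v : V) : V → ℚ :=
  fun u => -((imat G b)⁻¹ u v)

/-- The `E*`-coordinates of `x`: `coeff G b x v = -(x, E_v)`. -/
def coeff (G : SimpleGraph V) (b : V → ℤ) (x : V → ℚ) : V → ℚ :=
  fun v => -((imat G b).mulVec x v)

/-- Valency of a vertex. -/
def deg (G : SimpleGraph V) (v : V) : ℕ := (G.neighborSet v).ncard

/-- Generalized binomial coefficient `C(d, n) = d(d-1)⋯(d-n+1)/n!` for `d : ℤ`, `n : ℕ`. -/
def qchoose (d : ℤ) (n : ℕ) : ℚ :=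
  (∏ i ∈ Finset.range n, ((d : ℚ) - (i : ℚ))) / (Nat.factorial n : ℚ)

/-- The natural number represented by a rational (its numerator, truncated). -/
def natOf (q : ℚ) : ℕ := q.num.toNat

/-- All values of `x` are nonnegative integers. -/
def IsNatVec {α : Type*} (x : α → ℚ) : Prop := ∀ v, ∃ n : ℕ, x v = (n : ℚ)

/-- All values of `x` are integers. -/
def IsIntVec {α : Type*} (x : α → ℚ) : Prop := ∀ v, ∃ n : ℤ, x v = (n : ℚ)

/-- The coefficient `z(x)` of the topological Poincaré series
`Z(t) = ∏_v (1 - t^{E*_v})^{δ_v - 2}`. -/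
def zcoef (G : SimpleGraph V) (b : V → ℤ) (x : V → ℚ) : ℚ :=
  if IsNatVec (coeff G b x) then
    ∏ v, (-1 : ℚ) ^ natOf (coeff G b x v) *
      qchoose ((deg G v : ℤ) - 2) (natOf (coeff G b x v))
  else 0

/-- The coefficient `r(x)` of the relative series
`R(t) = ∏_v (1 - t^{E*_v})^{δ_v - 2 + a_v}`. -/
def rcoef (G : SimpleGraph V) (b : V → ℤ) (a : V → ℕ) (x : V → ℚ) : ℚ :=
  if IsNatVec (coeff G b x) then
    ∏ v, (-1 : ℚ) ^ natOf (coeff G b x v) *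
      qchoose ((deg G v : ℤ) - 2 + (a v : ℤ)) (natOf (coeff G b x v))
  else 0

/-- Membership in the Lipman cone `S'`. -/
def memS' (G : SimpleGraph V) (b : V → ℤ) (x : V → ℚ) : Prop :=
  ∃ a : V → ℕ, x = ∑ v, (a v : ℚ) • Estar G b v

/-- Membership in the interior `int S'`. -/
def memIntS' (G : SimpleGraph V) (b : V → ℤ) (x : V → ℚ) : Prop :=
  ∃ a : V → ℚ, (∀ v, 0 < a v) ∧ x = ∑ v, a v • Estar G b v

/-- Membership in the dual lattice `L'`. -/
def memL' (G : SimpleGraph V) (b : V → ℤ) (x : V → ℚ) : Prop :=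
  ∃ a : V → ℤ, x = ∑ v, (a v : ℚ) • Estar G b v

/-- `x` and `y` have the same class in `H = L'/L`, i.e. differ by an integral vector. -/
def SameClass (x y : V → ℚ) : Prop := ∀ v, ∃ n : ℤ, x v - y v = (n : ℚ)

/-- Coordinatewise fractional part: the representative `r_{[x]}` with entries in `[0,1)`. -/
def fracPart (x : V → ℚ) : V → ℚ := fun v => Int.fract (x v)

/-- The anticanonical cycle `Z_K`, determined by `(Z_K, E_v) = b v + 2` for all `v`. -/
def ZK (G : SimpleGraph V) (b : V → ℤ) : V → ℚ :=
  ((imat G b)⁻¹).mulVec (fun v => (b v : ℚ) + 2)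

/-- The Riemann–Roch function `χ(x) = -(x, x - Z_K)/2`. -/
def chi (G : SimpleGraph V) (b : V → ℤ) (x : V → ℚ) : ℚ :=
  -(pairing G b x (x - ZK G b)) / 2

/-- The counting function `Q_{[x]}(x) = ∑_{y ∈ S', [y] = [x], y ≱ x} z(y)` (a finite sum). -/
def Q (G : SimpleGraph V) (b : V → ℤ) (x : V → ℚ) : ℚ :=
  ∑ᶠ y ∈ {y : V → ℚ | memS' G b y ∧ SameClass y x ∧ ¬ x ≤ y}, zcoef G b y

/-- `c` is the normalized Seiberg–Witten invariant of the class `[x0]`: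
`c = Q_{[x]}(x) - χ(x) + χ(r_{[x]})` for every `x ∈ (Z_K + int S') ∩ L'` with `[x] = [x0]`. -/
def IsSWat (G : SimpleGraph V) (b : V → ℤ) (x0 : V → ℚ) (c : ℚ) : Prop :=
  ∀ x : V → ℚ, memL' G b x → SameClass x x0 →
    (∃ y, memIntS' G b y ∧ x = ZK G b + y) →
    c = Q G b x - chi G b x + chi G b (fracPart x)

/-- The virtual cohomology number `h¹_virt(x) = -Q_{[x]}(x) + χ(x) - χ(r_{[x]}) + sw_{[x]}`. -/
def h1virt (G : SimpleGraph V) (b : V → ℤ) (sw : (V → ℚ) → ℚ) (x : V → ℚ) : ℚ :=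
  - Q G b x + chi G b x - chi G b (fracPart x) + sw x


/-- The base vector `E_v` as an element of `ℚ^V`. -/
def Epi (v : V) : V → ℚ := Pi.single v 1

/-- The branch of the vertex `v` containing `u`: the connected component of `u`
in the graph obtained from `G` by deleting `v`. -/
def branchSet (G : SimpleGraph V) (v u : V) : Set V :=
  {w : V | ∃ (hw : w ≠ v) (hu : u ≠ v),
    (G.induce {x : V | x ≠ v}).Reachable ⟨w, hw⟩ ⟨u, hu⟩}

/-- The monomial conditions for `(G, b)`. -/
def MonomialCond (G : SimpleGraph V) (b : V → ℤ) : Prop :=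
  ∀ n : V, 3 ≤ deg G n → ∀ u ∈ G.neighborSet n,
    ∃ a : V → ℕ,
      (∀ w, a w ≠ 0 → deg G w = 1 ∧ w ∈ branchSet G n u) ∧
      IsNatVec (fun w => (∑ x, (a x : ℚ) • Estar G b x - Estar G b n) w) ∧
      (∀ w, w ∉ branchSet G n u → (∑ x, (a x : ℚ) • Estar G b x - Estar G b n) w = 0)

/-- Characteristic vector of a finite set of vertices. -/
def EFset (F : Finset V) : V → ℚ := fun u => if u ∈ F then 1 else 0

/-- The lattice weight `w(x, I) = max_{F ⊆ I} χ(x + E_F)`. -/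
def wfun (G : SimpleGraph V) (b : V → ℤ) (x : V → ℚ) (I : Finset V) : ℚ :=
  I.powerset.sup' ⟨∅, Finset.empty_mem_powerset I⟩ (fun F => chi G b (x + EFset F))

/-- The weighted Euler characteristic `χ_w(R(a, bb))` of the rectangle `R(a, bb)`. -/
def chiw (G : SimpleGraph V) (b : V → ℤ) (a bb : V → ℚ) : ℚ :=
  ∑ᶠ p ∈ {p : (V → ℚ) × Finset V | SameClass p.1 a ∧ a ≤ p.1 ∧ p.1 + EFset p.2 ≤ bb},
    (-1 : ℚ) ^ (p.2.card + 1) * wfun G b p.1 p.2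

/-- `V_w`: the set of vertices `u` such that every walk from `u` to `v₀` passes through `w`. -/
def Vw (G : SimpleGraph V) (v₀ w : V) : Set V :=
  {u : V | ∀ p : G.Walk u v₀, w ∈ p.support}

/-- `w` as an element of `V_w`. -/
def wElem (G : SimpleGraph V) (v₀ w : V) : ↥(Vw G v₀ w) :=
  ⟨w, fun p => p.start_mem_support⟩

/-- The dual operator `j*_w : L' → L'(Γ_w)`, sending `E*_u ↦ E*_u(Γ_w)` for `u ∈ V_w`
and `E*_u ↦ 0` otherwise. -/
def jdual (G : SimpleGraph V) (b : V → ℤ) (v₀ w : V) (x : V → ℚ) : ↥(Vw G v₀ w) → ℚ :=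
  ∑ u : ↥(Vw G v₀ w),
    coeff G b x u.1 • Estar (G.induce (Vw G v₀ w)) (fun t => b t.1) u

/-- `r^{Γ_w}(y) = z^{Γ_w}(y) - z^{Γ_w}(y - E*_w(Γ_w))`. -/
def rGw (G : SimpleGraph V) (b : V → ℤ) (v₀ w : V) (y : ↥(Vw G v₀ w) → ℚ) : ℚ :=
  zcoef (G.induce (Vw G v₀ w)) (fun t => b t.1) y -
    zcoef (G.induce (Vw G v₀ w)) (fun t => b t.1)
      (y - Estar (G.induce (Vw G v₀ w)) (fun t => b t.1) (wElem G v₀ w))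

/-- `C(w, x) = ∑_{l ∈ L(Γ_w), l ≥ 0, l_w = 0} r^{Γ_w}(j*_w(x) + l)` (a finite sum). -/
def Cfun (G : SimpleGraph V) (b : V → ℤ) (v₀ w : V) (x : V → ℚ) : ℚ :=
  ∑ᶠ l ∈ {l : ↥(Vw G v₀ w) → ℚ | IsNatVec l ∧ l (wElem G v₀ w) = 0},
    rGw G b v₀ w (jdual G b v₀ w x + l)

end SWpaper

/-!
Put `l' = ∑_{v ∈ J} a_v E*_v` and `x = l'' - l'`. Since `(E*_u, E_v) = -δ_{uv}`, the vector
`I x` equals `-a''_u ≤ 0` at every `u ∉ J`, and `x ≥ 0` on `J` by hypothesis; so `(I x)_u ≤ 0`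
wherever `x_u < 0`. The off-diagonal entries of `I` are nonnegative, hence the negative part
`x⁻` of `x` satisfies `x⁻_u (I x⁻)_u ≥ 0` for every `u`. Thus `(x⁻, x⁻) ≥ 0`, and negative
definiteness forces `x⁻ = 0`.
-/

namespace SWpaper

open Matrix

section NegDef

variable {V : Type} [Fintype V] {M : Matrix V V ℚ}

lemma NegDef.isUnit_det [DecidableEq V] (hM : NegDef M) : IsUnit M.det := by
  rw [isUnit_iff_ne_zero]
  intro hdet
  obtain ⟨x, hx0, hx⟩ := exists_mulVec_eq_zero_iff.2 hdet
  simpa [hx] using hM x hx0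

lemma mulVec_apply_nonneg_of_offDiag_nonneg (hoff : ∀ u v, u ≠ v → 0 ≤ M u v)
    {p : V → ℚ} (hp : 0 ≤ p) {u : V} (hpu : p u = 0) : 0 ≤ (M *ᵥ p) u := by
  refine Finset.sum_nonneg fun v _ => ?_
  rcases eq_or_ne u v with rfl | huv
  · simp [hpu]
  · exact mul_nonneg (hoff u v huv) (hp v)

/-- A maximum principle for negative definite matrices with nonnegative off-diagonal entries. -/
theorem NegDef.nonneg_of_mulVec_nonpos (hM : NegDef M) (hoff : ∀ u v, u ≠ v → 0 ≤ M u v)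
    {x : V → ℚ} (hx : ∀ u, x u < 0 → (M *ᵥ x) u ≤ 0) : 0 ≤ x := by
  set p : V → ℚ := fun u => max (x u) 0
  set n : V → ℚ := fun u => min (x u) 0
  have hpn : x = p + n := funext fun u => by simp [p, n, max_add_min]
  have hterm : ∀ u, 0 ≤ n u * (M *ᵥ n) u := fun u => by
    rcases lt_or_ge (x u) 0 with hxu | hxu
    · have hMp : 0 ≤ (M *ᵥ p) u :=
        mulVec_apply_nonneg_of_offDiag_nonneg hoff (fun v => le_max_right _ _) (max_eq_right hxu.le)
      have hMn : (M *ᵥ n) u = (M *ᵥ x) u - (M *ᵥ p) u := by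
        rw [hpn, mulVec_add]; simp
      refine mul_nonneg_of_nonpos_of_nonpos (min_le_right _ _) ?_
      linarith [hx u hxu]
    · simp [n, min_eq_right hxu]
  have hn : n = 0 := by
    by_contra hn
    exact (hM n hn).not_ge (Finset.sum_nonneg fun u _ => hterm u)
  intro u
  simpa [n] using congrFun hn u

end NegDef

section IntersectionMatrix

variable {V : Type} [DecidableEq V]

lemma imat_apply_nonneg_of_ne (G : SimpleGraph V) (b : V → ℤ) {u v : V} (huv : u ≠ v) :
    0 ≤ imat G b u v := by
  simp only [imat, of_apply, if_neg huv]
  split_ifs <;> norm_num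

lemma imat_mulVec_Estar [Fintype V] (G : SimpleGraph V) (b : V → ℤ) (hND : NegDef (imat G b))
    (v : V) :
    imat G b *ᵥ Estar G b v = -Pi.single v 1 := by
  have hcol : Estar G b v = -((imat G b)⁻¹ *ᵥ Pi.single v 1) := by
    funext u
    simp [Estar]
  rw [hcol, mulVec_neg, mulVec_mulVec, mul_nonsing_inv _ hND.isUnit_det,
    one_mulVec]

lemma imat_mulVec_sum_smul_Estar [Fintype V] (G : SimpleGraph V) (b : V → ℤ)
    (hND : NegDef (imat G b)) (s : Finset V) (c : V → ℚ) (u : V) :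
    (imat G b *ᵥ ∑ v ∈ s, c v • Estar G b v) u = -if u ∈ s then c u else 0 := by
  simp [mulVec_sum, mulVec_smul, imat_mulVec_Estar G b hND, Finset.sum_apply, Pi.single_apply]

end IntersectionMatrix

theorem statement17_general {V : Type} [Fintype V] [DecidableEq V]
    (G : SimpleGraph V) (b : V → ℤ)
    (hND : NegDef (imat G b))
    (J : Finset V) (a : V → ℕ)
    (y : V → ℚ) (hy : memS' G b y)
    (h : ∀ v ∈ J, (∑ w ∈ J, (a w : ℚ) • Estar G b w) v ≤ y v) :
    (∑ w ∈ J, (a w : ℚ) • Estar G b w) ≤ y := by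
  obtain ⟨a'', rfl⟩ := hy
  rw [← sub_nonneg]
  refine hND.nonneg_of_mulVec_nonpos (fun u v => imat_apply_nonneg_of_ne G b) fun u hu => ?_
  have huJ : u ∉ J := fun huJ => (h u huJ).not_gt (by simpa using hu)
  rw [mulVec_sub, Pi.sub_apply, imat_mulVec_sum_smul_Estar G b hND,
    imat_mulVec_sum_smul_Estar G b hND, if_pos (Finset.mem_univ u), if_neg huJ]
  simp

/-- if `l' = ∑_{v∈J} a_v E*_v` with all `a_v > 0` and `l'' ∈ S'`
dominates `l'` on `J`, then `l'' ≥ l'` everywhere. -/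
theorem statement17 {V : Type} [Fintype V] [DecidableEq V]
    (G : SimpleGraph V) (b : V → ℤ)
    (hT : G.IsTree) (hND : NegDef (imat G b))
    (J : Finset V) (hJ : J.Nonempty) (a : V → ℕ) (ha : ∀ v ∈ J, 0 < a v)
    (y : V → ℚ) (hy : memS' G b y)
    (h : ∀ v ∈ J, (∑ w ∈ J, (a w : ℚ) • Estar G b w) v ≤ y v) :
    (∑ w ∈ J, (a w : ℚ) • Estar G b w) ≤ y :=
  statement17_general G b hND J a y hy h

end SWpaper
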